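/- arXiv:1901.09547 — 5 statements merged into one kernel-verified Lean document; each statement's English description precedes it below -/
import Mathlib

section
/- Let T be a tree of order n and let x, y, z be vertices such that xyz is a path in T (i.e., xy and yz are edges and x ≠ z). If s(y) - s(x) = c, then s(z) - s(y) ≥ c + 2, where s denotes the status function of T. -/
open SimpleGraph

private lemma dist_ne_of_adj {V : Type*} {G : SimpleGraph V} (hT : G.IsTree)
    {u v : V} (huv : G.Adj u v) (w : V) : G.dist u w ≠ G.dist v w := by
  classical
  intro h
  obtain ⟨p, hp, hlen⟩ := hT.isConnected.exists_path_of_dist u w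
  have hvns : v ∉ p.support := by
    intro hv
    have h1 : G.dist u v ≤ (p.takeUntil v hv).length := SimpleGraph.dist_le _
    have h2 : G.dist v w ≤ (p.dropUntil v hv).length := SimpleGraph.dist_le _
    have h3 : (p.takeUntil v hv).length + (p.dropUntil v hv).length = p.length := by
      have := congr_arg SimpleGraph.Walk.length (p.take_spec hv)
      rwa [SimpleGraph.Walk.length_append] at this
    have hd1 : G.dist u v = 1 := by rwa [SimpleGraph.dist_eq_one_iff_adj]
    omega
  have hq : (SimpleGraph.Walk.cons huv.symm p).IsPath := hp.cons hvns
  obtain ⟨q, hq', hqlen⟩ := hT.isConnected.exists_path_of_dist v w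
  have := (hT.existsUnique_path v w).unique hq hq'
  have hlen2 := congr_arg SimpleGraph.Walk.length this
  simp [SimpleGraph.Walk.length_cons, hlen, hqlen] at hlen2
  omega

private lemma key {V : Type*} {G : SimpleGraph V} (hT : G.IsTree)
    {x y z : V} (hxy : G.Adj x y) (hyz : G.Adj y z) (hxz : x ≠ z) (w : V)
    (h1 : G.dist x w + 1 = G.dist y w) (h2 : G.dist z w + 1 = G.dist y w) : False := by
  classical
  obtain ⟨p, hp, hplen⟩ := hT.isConnected.exists_path_of_dist x w
  obtain ⟨q, hq, hqlen⟩ := hT.isConnected.exists_path_of_dist z w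
  have hp' : (SimpleGraph.Walk.cons hxy.symm p).IsPath := by
    apply SimpleGraph.Walk.isPath_of_length_eq_dist
    simp [SimpleGraph.Walk.length_cons, hplen, h1]
  have hq' : (SimpleGraph.Walk.cons hyz q).IsPath := by
    apply SimpleGraph.Walk.isPath_of_length_eq_dist
    simp [SimpleGraph.Walk.length_cons, hqlen, h2]
  have heq := (hT.existsUnique_path y w).unique hp' hq'
  have := congr_arg (fun r => SimpleGraph.Walk.getVert r 1) heq
  simp only [SimpleGraph.Walk.getVert_cons_succ, SimpleGraph.Walk.getVert_zero] at this
  exact hxz this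

/-- If xyz is a path in a tree and c = s(y) - s(x), then s(z) - s(y) ≥ c + 2. -/
theorem stmt_1 {V : Type*} [Fintype V] (G : SimpleGraph V) (hT : G.IsTree)
    (x y z : V) (hxy : G.Adj x y) (hyz : G.Adj y z) (hxz : x ≠ z)
    (c : ℤ) (hc : (∑ u, (G.dist y u : ℤ)) - (∑ u, (G.dist x u : ℤ)) = c) :
    (∑ u, (G.dist z u : ℤ)) - (∑ u, (G.dist y u : ℤ)) ≥ c + 2 := by
  have hconn := hT.isConnected
  -- pointwise facts
  have hpm : ∀ (u v w : V), G.Adj u v →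
      ((G.dist v w : ℤ) - G.dist u w = 1 ∨ (G.dist v w : ℤ) - G.dist u w = -1) := by
    intro u v w huv
    have h1 : G.dist v w ≤ G.dist v u + G.dist u w := hconn.dist_triangle
    have h2 : G.dist u w ≤ G.dist u v + G.dist v w := hconn.dist_triangle
    have hd1 : G.dist u v = 1 := by rwa [SimpleGraph.dist_eq_one_iff_adj]
    have hd2 : G.dist v u = 1 := by rw [SimpleGraph.dist_comm]; exact hd1
    have hne := dist_ne_of_adj hT huv w
    omega
  set F : V → ℤ := fun u =>
    ((G.dist z u : ℤ) - G.dist y u) - ((G.dist y u : ℤ) - G.dist x u) with hF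
  have hFnonneg : ∀ u ∈ Finset.univ, 0 ≤ F u := by
    intro u _
    have ha := hpm x y u hxy
    have hb := hpm y z u hyz
    rcases ha with ha | ha
    · rcases hb with hb | hb
      · simp [hF]; omega
      · exfalso
        apply key hT hxy hyz hxz u <;> omega
    · simp [hF]; omega
  have hFy : F y = 2 := by
    have hd1 : G.dist x y = 1 := by rwa [SimpleGraph.dist_eq_one_iff_adj]
    have hd2 : G.dist y z = 1 := by rwa [SimpleGraph.dist_eq_one_iff_adj]
    have hd1' : G.dist y y = 0 := by simp
    have hd2' : G.dist z y = 1 := by rw [SimpleGraph.dist_comm]; exact hd2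
    simp [hF, hd1, hd1', hd2']
  have hsum : (2 : ℤ) ≤ ∑ u, F u := by
    rw [← hFy]
    exact Finset.single_le_sum hFnonneg (Finset.mem_univ y)
  have : ∑ u, F u = ((∑ u, (G.dist z u : ℤ)) - ∑ u, (G.dist y u : ℤ))
      - ((∑ u, (G.dist y u : ℤ)) - ∑ u, (G.dist x u : ℤ)) := by
    simp [hF, Finset.sum_sub_distrib]
  omega
end

section
/- Let x_0 x_1 x_2 ... x_k be a path in a tree T (consecutive vertices adjacent, all distinct) and let d = s(x_1) - s(x_0). Then s(x_{j+1}) - s(x_j) ≥ d + 2j for each j = 1, 2, ..., k-1. -/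
noncomputable section

open SimpleGraph Walk

attribute [local instance] Classical.propDecidable

lemma tree_path_length {V : Type*} {G : SimpleGraph V} (hT : G.IsTree) {u v : V}
    (p : G.Walk u v) (hp : p.IsPath) : p.length = G.dist u v := by
  obtain ⟨q, hq⟩ := hT.isConnected.exists_walk_length_eq_dist u v
  have h1 : p = q.bypass := (hT.existsUnique_path u v).unique hp q.bypass_isPath
  have h2 : p.length ≤ G.dist u v := by
    rw [h1, ← hq]; exact q.length_bypass_le
  exact le_antisymm h2 (SimpleGraph.dist_le p)

lemma mem_support_le {V : Type*} {G : SimpleGraph V} {a w c : V} (p : G.Walk a w)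
    (hc : c ∈ p.support) : G.dist c w ≤ p.length := by
  have h := congrArg Walk.length (p.take_spec hc)
  rw [Walk.length_append] at h
  have := SimpleGraph.dist_le (p.dropUntil c hc)
  omega

lemma step_lemma {V : Type*} {G : SimpleGraph V} (hT : G.IsTree) {a b : V} (hab : G.Adj a b)
    (w : V) : G.dist b w = G.dist a w + 1 ∨ G.dist a w = G.dist b w + 1 := by
  have hconn := hT.isConnected
  have hab1 : G.dist a b = 1 := SimpleGraph.dist_eq_one_iff_adj.2 hab
  have hba1 : G.dist b a = 1 := SimpleGraph.dist_eq_one_iff_adj.2 hab.symm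
  have t1 : G.dist a w ≤ G.dist a b + G.dist b w := hconn.dist_triangle
  have t2 : G.dist b w ≤ G.dist b a + G.dist a w := hconn.dist_triangle
  have hne : G.dist a w ≠ G.dist b w := by
    intro he
    obtain ⟨p, hp, hup⟩ := hT.existsUnique_path a w
    obtain ⟨q, hq, huq⟩ := hT.existsUnique_path b w
    by_cases hmem : a ∈ q.support
    · have hd : (q.dropUntil a hmem).length = G.dist a w :=
        tree_path_length hT _ (hq.dropUntil hmem)
      have h := congrArg Walk.length (q.take_spec hmem)
      rw [Walk.length_append] at h
      have hql : q.length = G.dist b w := tree_path_length hT q hq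
      have ht0 : (q.takeUntil a hmem).length = 0 := by omega
      exact hab.ne (Walk.eq_of_length_eq_zero ht0).symm
    · have hcons : (Walk.cons hab q).IsPath := hq.cons hmem
      have := hup _ hcons
      have hl := congrArg Walk.length this
      rw [Walk.length_cons] at hl
      have hpl : p.length = G.dist a w := tree_path_length hT p hp
      have hql : q.length = G.dist b w := tree_path_length hT q hq
      omega
  omega

lemma nest_lemma {V : Type*} {G : SimpleGraph V} (hT : G.IsTree) {a b c : V}
    (hab : G.Adj a b) (hbc : G.Adj b c) (hac : a ≠ c) (w : V)
    (h : G.dist c w < G.dist b w) : G.dist b w < G.dist a w := by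
  rcases step_lemma hT hab w with h1 | h1
  · exfalso
    rcases step_lemma hT hbc w with h2 | h2
    · omega
    · obtain ⟨p, hp, hup⟩ := hT.existsUnique_path a w
      obtain ⟨q, hq, huq⟩ := hT.existsUnique_path c w
      have hpl : p.length = G.dist a w := tree_path_length hT p hp
      have hql : q.length = G.dist c w := tree_path_length hT q hq
      have hbp : b ∉ p.support := by
        intro hmem; have := mem_support_le p hmem; omega
      have hbq : b ∉ q.support := by
        intro hmem; have := mem_support_le q hmem; omega
      have hc1 : (Walk.cons hab.symm p).IsPath := hp.cons hbp
      have hc2 : (Walk.cons hbc q).IsPath := hq.cons hbq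
      obtain ⟨r, hr, hur⟩ := hT.existsUnique_path b w
      have he : Walk.cons hab.symm p = Walk.cons hbc q := by
        rw [hur _ hc1, hur _ hc2]
      have hs := congrArg Walk.support he
      rw [Walk.support_cons, Walk.support_cons, p.support_eq_cons, q.support_eq_cons] at hs
      simp at hs
      have hh := congrArg List.head? hs
      rw [p.support_eq_cons, q.support_eq_cons] at hh
      simp only [List.head?_cons, Option.some.injEq] at hh
      exact hac hh
  · omega

/-- Lemma 2: if x_0 x_1 ... x_k is a path in a tree and d = s(x_1) - s(x_0),
then s(x_{j+1}) - s(x_j) ≥ d + 2j for each j = 1, ..., k-1. -/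
theorem stmt_2 {V : Type*} [Fintype V] (G : SimpleGraph V) (hT : G.IsTree)
    (k : ℕ) (x : ℕ → V)
    (hadj : ∀ i, i < k → G.Adj (x i) (x (i + 1)))
    (hinj : ∀ i j, i ≤ k → j ≤ k → x i = x j → i = j)
    (d : ℤ) (hd : (∑ u, (G.dist (x 1) u : ℤ)) - (∑ u, (G.dist (x 0) u : ℤ)) = d) :
    ∀ j, 1 ≤ j → j + 1 ≤ k →
      (∑ u, (G.dist (x (j + 1)) u : ℤ)) - (∑ u, (G.dist (x j) u : ℤ)) ≥ d + 2 * j := by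
  classical
  set B : ℕ → Finset V := fun i =>
    Finset.univ.filter fun w => G.dist (x (i + 1)) w < G.dist (x i) w with hB
  have hsum : ∀ i, i < k → (∑ u, (G.dist (x (i + 1)) u : ℤ)) - (∑ u, (G.dist (x i) u : ℤ))
      = (Fintype.card V : ℤ) - 2 * (B i).card := by
    intro i hi
    rw [← Finset.sum_sub_distrib]
    have hterm : ∀ w : V, ((G.dist (x (i + 1)) w : ℤ) - G.dist (x i) w)
        = if G.dist (x (i + 1)) w < G.dist (x i) w then (-1 : ℤ) else 1 := by
      intro w
      rcases step_lemma hT (hadj i hi) w with h | h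
      · rw [if_neg (by omega)]; omega
      · rw [if_pos (by omega)]; omega
    rw [Finset.sum_congr rfl fun w _ => hterm w, Finset.sum_ite, Finset.sum_const,
      Finset.sum_const]
    have hcard := Finset.card_filter_add_card_filter_not
      (s := (Finset.univ : Finset V))
      (p := fun w => G.dist (x (i + 1)) w < G.dist (x i) w)
    rw [Finset.card_univ] at hcard
    have hBc : (B i).card =
        (Finset.univ.filter fun w => G.dist (x (i + 1)) w < G.dist (x i) w).card := by
      rw [hB]
    simp only [nsmul_eq_mul, mul_neg, mul_one]
    rw [hBc]
    push_cast [← hcard]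
    ring
  have hmono : ∀ i, i + 2 ≤ k → (B (i + 1)).card + 1 ≤ (B i).card := by
    intro i hik
    have hsub : B (i + 1) ⊆ B i := by
      intro w hw
      simp only [hB, Finset.mem_filter, Finset.mem_univ, true_and] at hw ⊢
      exact nest_lemma hT (hadj i (by omega)) (hadj (i + 1) (by omega))
        (fun hne => by have := hinj i (i + 2) (by omega) (by omega) hne; omega) w hw
    have hmem : x (i + 1) ∈ B i := by
      simp only [hB, Finset.mem_filter, Finset.mem_univ, true_and]
      have h1 : G.dist (x i) (x (i + 1)) = 1 :=
        SimpleGraph.dist_eq_one_iff_adj.2 (hadj i (by omega))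
      simp [SimpleGraph.dist_self, h1]
    have hnmem : x (i + 1) ∉ B (i + 1) := by
      simp only [hB, Finset.mem_filter, Finset.mem_univ, true_and, not_lt]
      simp [SimpleGraph.dist_self]
    have := Finset.card_lt_card ((Finset.ssubset_iff_of_subset hsub).2 ⟨x (i + 1), hmem, hnmem⟩)
    omega
  have hchain : ∀ j, j < k → (B j).card + j ≤ (B 0).card := by
    intro j
    induction j with
    | zero => intro _; omega
    | succ m ih =>
      intro h
      have h1 := ih (by omega)
      have h2 := hmono m (by omega)
      omega
  intro j hj1 hjk
  have hd0 := hsum 0 (by omega)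
  norm_num at hd0
  have hdj := hsum j (by omega)
  have hc := hchain j (by omega)
  rw [hdj]
  rw [hd0] at hd
  omega
end
end

section
/- Let x_0 x_1 ... x_k be a path in a tree T with s(x_0) ≤ s(x_1). Then s(x_1) < s(x_2) < s(x_3) < ... < s(x_k), and moreover s(x_{j+1}) - s(x_j) ≥ 2j for each j = 1, ..., k-1. -/
open SimpleGraph Finset

section aux

variable {V : Type*} {G : SimpleGraph V}

private lemma takeUntil_add_dropUntil {u v w : V} [DecidableEq V] (P : G.Walk u v)
    (h : w ∈ P.support) :
    (P.takeUntil w h).length + (P.dropUntil w h).length = P.length := by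
  have h0 := congrArg SimpleGraph.Walk.length (P.take_spec h)
  rwa [SimpleGraph.Walk.length_append] at h0

/-- In a tree, for adjacent `a b`, every `w` satisfies exactly one of
`d(w,b) = d(w,a)+1` or `d(w,a) = d(w,b)+1`. -/
private lemma tree_dist_dichotomy (hT : G.IsTree) {a b : V} (hab : G.Adj a b) (w : V) :
    G.dist w b = G.dist w a + 1 ∨ G.dist w a = G.dist w b + 1 := by
  classical
  have hconn := hT.isConnected
  have hab1 : G.dist a b = 1 := SimpleGraph.dist_eq_one_iff_adj.mpr hab
  have hba1 : G.dist b a = 1 := SimpleGraph.dist_eq_one_iff_adj.mpr hab.symm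
  have t1 : G.dist w b ≤ G.dist w a + 1 := by
    calc G.dist w b ≤ G.dist w a + G.dist a b := hconn.dist_triangle
    _ = G.dist w a + 1 := by rw [hab1]
  have t2 : G.dist w a ≤ G.dist w b + 1 := by
    calc G.dist w a ≤ G.dist w b + G.dist b a := hconn.dist_triangle
    _ = G.dist w b + 1 := by rw [hba1]
  by_contra hcon
  push_neg at hcon
  have heq : G.dist w a = G.dist w b := by omega
  set m := G.dist w a with hm
  obtain ⟨P, hP, hPl⟩ := hconn.exists_path_of_dist a w
  obtain ⟨Q, hQ, hQl⟩ := hconn.exists_path_of_dist b w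
  have hPlen : P.length = m := by rw [hPl, SimpleGraph.dist_comm]
  have hQlen : Q.length = m := by rw [hQl, SimpleGraph.dist_comm, ← heq]
  have hbP : b ∉ P.support := by
    intro hmem
    have hlen := takeUntil_add_dropUntil P hmem
    have hd1 : G.dist b w ≤ (P.dropUntil b hmem).length := SimpleGraph.dist_le _
    have hd2 : G.dist b w = m := by rw [SimpleGraph.dist_comm, ← heq]
    have htake0 : (P.takeUntil b hmem).length = 0 := by omega
    exact hab.ne (SimpleGraph.Walk.eq_of_length_eq_zero htake0)
  have hcons : (P.cons hab.symm).IsPath := hP.cons hbP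
  have huniq := hT.IsAcyclic.path_unique ⟨P.cons hab.symm, hcons⟩ ⟨Q, hQ⟩
  have hval : (P.cons hab.symm) = Q := congrArg Subtype.val huniq
  have hlen : (P.cons hab.symm).length = Q.length := by rw [hval]
  rw [SimpleGraph.Walk.length_cons, hPlen, hQlen] at hlen
  omega

/-- Propagation along a path in a tree: if `w` is on the far side of edge `ab`,
it is on the far side of the next edge `bc`. -/
private lemma tree_dist_propagate (hT : G.IsTree) {a b c : V} (hab : G.Adj a b)
    (hbc : G.Adj b c) (hac : a ≠ c) {w : V} (h : G.dist w b = G.dist w a + 1) :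
    G.dist w c = G.dist w b + 1 := by
  classical
  rcases tree_dist_dichotomy hT hbc w with h' | h'
  · exact h'
  · exfalso
    have hconn := hT.isConnected
    set m := G.dist w a with hm
    have hwc : G.dist w c = m := by omega
    obtain ⟨P, hP, hPl⟩ := hconn.exists_path_of_dist a w
    obtain ⟨Q, hQ, hQl⟩ := hconn.exists_path_of_dist c w
    have hPlen : P.length = m := by rw [hPl, SimpleGraph.dist_comm]
    have hQlen : Q.length = m := by rw [hQl, SimpleGraph.dist_comm, hwc]
    have hbP : b ∉ P.support := by
      intro hmem
      have hlen := takeUntil_add_dropUntil P hmem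
      have hd1 : G.dist b w ≤ (P.dropUntil b hmem).length := SimpleGraph.dist_le _
      have hd2 : G.dist b w = m + 1 := by rw [SimpleGraph.dist_comm, h]
      omega
    have hbQ : b ∉ Q.support := by
      intro hmem
      have hlen := takeUntil_add_dropUntil Q hmem
      have hd1 : G.dist b w ≤ (Q.dropUntil b hmem).length := SimpleGraph.dist_le _
      have hd2 : G.dist b w = m + 1 := by rw [SimpleGraph.dist_comm, h]
      omega
    have hP' : (P.cons hab.symm).IsPath := hP.cons hbP
    have hQ' : (Q.cons hbc).IsPath := hQ.cons hbQ
    have huniq := hT.IsAcyclic.path_unique ⟨P.cons hab.symm, hP'⟩ ⟨Q.cons hbc, hQ'⟩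
    have hval : (P.cons hab.symm) = Q.cons hbc := congrArg Subtype.val huniq
    have h1 : (P.cons hab.symm).getVert 1 = a := by
      rw [SimpleGraph.Walk.getVert_cons _ _ one_ne_zero]; simp
    have h2 : (Q.cons hbc).getVert 1 = c := by
      rw [SimpleGraph.Walk.getVert_cons _ _ one_ne_zero]; simp
    rw [hval, h2] at h1
    exact hac h1.symm

/-- The set of vertices strictly closer to `a` than to `b`. -/
private noncomputable def sideSet {V : Type*} [Fintype V] (G : SimpleGraph V) (a b : V) :
    Finset V :=
  @Finset.filter _ (fun w => G.dist w b = G.dist w a + 1) (Classical.decPred _) Finset.univ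

private lemma mem_sideSet {V : Type*} [Fintype V] {G : SimpleGraph V} {a b w : V} :
    w ∈ sideSet G a b ↔ G.dist w b = G.dist w a + 1 := by
  simp [sideSet]

/-- The status difference across an edge of a tree. -/
private lemma status_diff {V : Type*} [Fintype V] {G : SimpleGraph V} (hT : G.IsTree)
    {a b : V} (hab : G.Adj a b) :
    (∑ u, (G.dist b u : ℤ)) - (∑ u, (G.dist a u : ℤ))
      = 2 * (sideSet G a b).card - Fintype.card V := by
  classical
  have key : ∀ w : V, (G.dist b w : ℤ) - (G.dist a w : ℤ)
      = if w ∈ sideSet G a b then 1 else -1 := by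
    intro w
    have e1 : G.dist b w = G.dist w b := SimpleGraph.dist_comm
    have e2 : G.dist a w = G.dist w a := SimpleGraph.dist_comm
    rcases tree_dist_dichotomy hT hab w with h | h
    · rw [if_pos (mem_sideSet.mpr h), e1, e2, h]; push_cast; ring
    · rw [if_neg (fun hc => by have := mem_sideSet.mp hc; omega), e1, e2, h]
      push_cast; ring
  have h1 : (∑ u, (G.dist b u : ℤ)) - (∑ u, (G.dist a u : ℤ))
      = ∑ w, ((G.dist b w : ℤ) - (G.dist a w : ℤ)) := by
    rw [Finset.sum_sub_distrib]
  rw [h1, Finset.sum_congr rfl (fun w _ => key w), Finset.sum_ite,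
    Finset.sum_const, Finset.sum_const, Finset.filter_univ_mem,
    Finset.filter_not, Finset.filter_univ_mem,
    Finset.card_sdiff_of_subset (Finset.subset_univ _), Finset.card_univ]
  have hle : (sideSet G a b).card ≤ Fintype.card V := by
    rw [← Finset.card_univ]; exact Finset.card_le_card (Finset.subset_univ _)
  simp only [nsmul_eq_mul, mul_one, mul_neg_one]
  rw [Nat.cast_sub hle]
  ring

end aux

/-- If x_0 x_1 ... x_k is a path in a tree with s(x_0) ≤ s(x_1), then
s(x_1) < s(x_2) < ... < s(x_k), and s(x_{j+1}) - s(x_j) ≥ 2j for 1 ≤ j ≤ k-1. -/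
theorem stmt_3 {V : Type*} [Fintype V] (G : SimpleGraph V) (hT : G.IsTree)
    (k : ℕ) (x : ℕ → V)
    (hadj : ∀ i, i < k → G.Adj (x i) (x (i + 1)))
    (hinj : ∀ i j, i ≤ k → j ≤ k → x i = x j → i = j)
    (h01 : (∑ u, G.dist (x 0) u) ≤ ∑ u, G.dist (x 1) u) :
    ∀ j, 1 ≤ j → j + 1 ≤ k →
      (∑ u, G.dist (x j) u) < (∑ u, G.dist (x (j + 1)) u) ∧
      (∑ u, (G.dist (x (j + 1)) u : ℤ)) - (∑ u, (G.dist (x j) u : ℤ)) ≥ 2 * j := by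
  intro j hj1 hjk
  classical
  set c : ℕ → ℕ := fun i => (sideSet G (x i) (x (i+1))).card with hc
  have hdiff : ∀ i, i < k →
      (∑ u, (G.dist (x (i+1)) u : ℤ)) - (∑ u, (G.dist (x i) u : ℤ))
        = 2 * c i - Fintype.card V := fun i hik => status_diff hT (hadj i hik)
  have hstep : ∀ i, i + 2 ≤ k → c i + 1 ≤ c (i+1) := by
    intro i hik
    have hadj1 : G.Adj (x i) (x (i+1)) := hadj i (by omega)
    have hadj2 : G.Adj (x (i+1)) (x (i+2)) := hadj (i+1) (by omega)
    have hne : x i ≠ x (i+2) := by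
      intro h
      have := hinj i (i+2) (by omega) (by omega) h
      omega
    have hsub : sideSet G (x i) (x (i+1)) ⊆ sideSet G (x (i+1)) (x (i+2)) := by
      intro w hw
      exact mem_sideSet.mpr
        (tree_dist_propagate hT hadj1 hadj2 hne (mem_sideSet.mp hw))
    have hmem : x (i+1) ∈ sideSet G (x (i+1)) (x (i+2)) := by
      rw [mem_sideSet, SimpleGraph.dist_self, SimpleGraph.dist_eq_one_iff_adj]
      exact hadj2
    have hnmem : x (i+1) ∉ sideSet G (x i) (x (i+1)) := by
      rw [mem_sideSet, SimpleGraph.dist_self]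
      omega
    have hins : insert (x (i+1)) (sideSet G (x i) (x (i+1)))
        ⊆ sideSet G (x (i+1)) (x (i+2)) := Finset.insert_subset hmem hsub
    have hcard := Finset.card_le_card hins
    rwa [Finset.card_insert_of_notMem hnmem] at hcard
  have hgrow : ∀ i, i + 1 ≤ k → c 0 + i ≤ c i := by
    intro i
    induction i with
    | zero => intro _; omega
    | succ m ih =>
      intro h
      have h1 := ih (by omega)
      have h2 := hstep m (by omega)
      omega
  have hd0 := hdiff 0 (by omega)
  simp only [Nat.zero_add] at hd0
  have hs01 : (∑ u, (G.dist (x 0) u : ℤ)) ≤ ∑ u, (G.dist (x 1) u : ℤ) := by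
    exact_mod_cast h01
  have hc0 : (Fintype.card V : ℤ) ≤ 2 * c 0 := by omega
  have hdj := hdiff j (by omega)
  have hgj := hgrow j hjk
  have hineq : (∑ u, (G.dist (x (j+1)) u : ℤ)) - (∑ u, (G.dist (x j) u : ℤ)) ≥ 2 * j := by
    rw [hdj]
    have : ((c 0 : ℤ)) + j ≤ (c j : ℤ) := by exact_mod_cast hgj
    omega
  refine ⟨?_, hineq⟩
  have hlt : (∑ u, (G.dist (x j) u : ℤ)) < ∑ u, (G.dist (x (j+1)) u : ℤ) := by
    have : (1 : ℤ) ≤ 2 * j := by omega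
    omega
  exact_mod_cast hlt
end

section
/- Let k ≥ 43 be an integer. For i ∈ {0,1,2,3}, define Ω_{k+i} = {2(k+i)+2, 2(k+i)+10, 4(k+i)+6}, and let Γ = A ∪ B where A = {p^2+5p+4 : p ∈ ℕ, p ≥ 1} and B = {q^2+q-6 : q ∈ ℕ, q ≥ 1}. Then at least one of Ω_k, Ω_{k+1}, Ω_{k+2}, Ω_{k+3} is disjoint from Γ. -/
def Bad8 (m : ℤ) : Prop :=
  ∃ s c : ℤ, 0 < s ∧ Odd s ∧ (c = 17 ∨ c = 33 ∨ c = 49 ∨ c = 65) ∧ s ^ 2 = 8 * m + c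

def Bad16 (m : ℤ) : Prop :=
  ∃ s c : ℤ, 0 < s ∧ Odd s ∧ (c = 33 ∨ c = 49) ∧ s ^ 2 = 16 * m + c

lemma sq_close' (s s' L : ℤ) (hs : 0 < s) (hs' : 0 < s')
    (ho : Odd s) (ho' : Odd s') (hL : 361 ≤ L)
    (h1 : L ≤ s ^ 2) (h2 : s ^ 2 ≤ L + 72)
    (h3 : L ≤ s' ^ 2) (h4 : s' ^ 2 ≤ L + 72) : s = s' := by
  have hs19 : 19 ≤ s := by nlinarith
  have hs19' : 19 ≤ s' := by nlinarith
  have hd : 2 ∣ (s - s') := by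
    obtain ⟨a, ha⟩ := ho; obtain ⟨b, hb⟩ := ho'; omega
  by_contra hne
  have hcase : s' ≤ s - 2 ∨ s + 2 ≤ s' := by omega
  rcases hcase with h | h
  · nlinarith [mul_nonneg (by omega : (0:ℤ) ≤ s - s' - 2) (by omega : (0:ℤ) ≤ s + s' + 2)]
  · nlinarith [mul_nonneg (by omega : (0:ℤ) ≤ s' - s - 2) (by omega : (0:ℤ) ≤ s' + s + 2)]

lemma claim1 (m m' : ℤ) (hm : 43 ≤ m) (h1 : m ≤ m') (h2 : m' ≤ m + 3)
    (b : Bad8 m) (b' : Bad8 m') : 2 ∣ (m' - m) := by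
  obtain ⟨s, c, hs, ho, hc, he⟩ := b
  obtain ⟨s', c', hs', ho', hc', he'⟩ := b'
  have hss : s = s' := by
    refine sq_close' s s' (8 * m + 17) hs hs' ho ho' (by omega) ?_ ?_ ?_ ?_
    · rw [he]; rcases hc with h | h | h | h <;> omega
    · rw [he]; rcases hc with h | h | h | h <;> omega
    · rw [he']; rcases hc' with h | h | h | h <;> omega
    · rw [he']; rcases hc' with h | h | h | h <;> omega
  have key : 8 * m + c = 8 * m' + c' := by rw [← he, ← he', hss]
  rcases hc with h | h | h | h <;> rcases hc' with h' | h' | h' | h' <;> omega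

lemma claim2 (m m' : ℤ) (hm : 43 ≤ m) (h1 : m ≤ m') (h2 : m' ≤ m + 3)
    (b : Bad16 m) (b' : Bad16 m') : m' - m ≤ 1 := by
  obtain ⟨s, c, hs, ho, hc, he⟩ := b
  obtain ⟨s', c', hs', ho', hc', he'⟩ := b'
  have hss : s = s' := by
    refine sq_close' s s' (16 * m + 33) hs hs' ho ho' (by omega) ?_ ?_ ?_ ?_
    · rw [he]; rcases hc with h | h <;> omega
    · rw [he]; rcases hc with h | h <;> omega
    · rw [he']; rcases hc' with h | h <;> omega
    · rw [he']; rcases hc' with h | h <;> omega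
  have key : 16 * m + c = 16 * m' + c' := by rw [← he, ← he', hss]
  rcases hc with h | h <;> rcases hc' with h' | h' <;> omega

lemma extract (m : ℤ)
    (h : (({2 * m + 2, 2 * m + 10, 4 * m + 6} : Set ℤ) ∩
        ({n : ℤ | ∃ p : ℤ, 1 ≤ p ∧ n = p ^ 2 + 5 * p + 4} ∪
          {n : ℤ | ∃ q : ℤ, 1 ≤ q ∧ n = q ^ 2 + q - 6})).Nonempty) :
    Bad8 m ∨ Bad16 m := by
  obtain ⟨n, hn⟩ := h
  obtain ⟨hn1, hn2⟩ := hn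
  simp only [Set.mem_insert_iff, Set.mem_singleton_iff] at hn1
  rcases hn2 with ⟨p, hp, hpe⟩ | ⟨q, hq, hqe⟩
  · rcases hn1 with h1 | h1 | h1
    · exact Or.inl ⟨2 * p + 5, 17, by omega, ⟨p + 2, by ring⟩, by tauto, by
        have : 2 * m + 2 = p ^ 2 + 5 * p + 4 := by rw [← h1, hpe]
        linear_combination -4 * this⟩
    · exact Or.inl ⟨2 * p + 5, 49, by omega, ⟨p + 2, by ring⟩, by tauto, by
        have : 2 * m + 10 = p ^ 2 + 5 * p + 4 := by rw [← h1, hpe]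
        linear_combination -4 * this⟩
    · exact Or.inr ⟨2 * p + 5, 33, by omega, ⟨p + 2, by ring⟩, by tauto, by
        have : 4 * m + 6 = p ^ 2 + 5 * p + 4 := by rw [← h1, hpe]
        linear_combination -4 * this⟩
  · rcases hn1 with h1 | h1 | h1
    · exact Or.inl ⟨2 * q + 1, 33, by omega, ⟨q, by ring⟩, by tauto, by
        have : 2 * m + 2 = q ^ 2 + q - 6 := by rw [← h1, hqe]
        linear_combination -4 * this⟩
    · exact Or.inl ⟨2 * q + 1, 65, by omega, ⟨q, by ring⟩, by tauto, by
        have : 2 * m + 10 = q ^ 2 + q - 6 := by rw [← h1, hqe]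
        linear_combination -4 * this⟩
    · exact Or.inr ⟨2 * q + 1, 49, by omega, ⟨q, by ring⟩, by tauto, by
        have : 4 * m + 6 = q ^ 2 + q - 6 := by rw [← h1, hqe]
        linear_combination -4 * this⟩

/-- For k ≥ 43, at least one of Ω_k, Ω_{k+1}, Ω_{k+2}, Ω_{k+3} is disjoint from
Γ = A ∪ B, where Ω_m = {2m+2, 2m+10, 4m+6}, A = {p²+5p+4 : p ≥ 1},
B = {q²+q-6 : q ≥ 1}. -/
theorem stmt_13 (k : ℤ) (hk : 43 ≤ k) :
    ∃ i : ℤ, 0 ≤ i ∧ i ≤ 3 ∧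
      ({2 * (k + i) + 2, 2 * (k + i) + 10, 4 * (k + i) + 6} : Set ℤ) ∩
        ({n : ℤ | ∃ p : ℤ, 1 ≤ p ∧ n = p ^ 2 + 5 * p + 4} ∪
          {n : ℤ | ∃ q : ℤ, 1 ≤ q ∧ n = q ^ 2 + q - 6}) = ∅ := by
  by_contra hcon
  push_neg at hcon
  have H : ∀ i : ℤ, 0 ≤ i → i ≤ 3 → Bad8 (k + i) ∨ Bad16 (k + i) :=
    fun i h1 h2 => extract (k + i) (hcon i h1 h2)
  have H0 := H 0 (by omega) (by omega)
  have H1 := H 1 (by omega) (by omega)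
  have H2 := H 2 (by omega) (by omega)
  have H3 := H 3 (by omega) (by omega)
  rcases H0 with h0 | h0 <;> rcases H1 with h1 | h1 <;>
    rcases H2 with h2 | h2 <;> rcases H3 with h3 | h3 <;>
  first
    | (have := claim1 (k + 0) (k + 1) (by omega) (by omega) (by omega)
        ‹Bad8 (k + 0)› ‹Bad8 (k + 1)›; omega)
    | (have := claim1 (k + 1) (k + 2) (by omega) (by omega) (by omega)
        ‹Bad8 (k + 1)› ‹Bad8 (k + 2)›; omega)
    | (have := claim1 (k + 2) (k + 3) (by omega) (by omega) (by omega)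
        ‹Bad8 (k + 2)› ‹Bad8 (k + 3)›; omega)
    | (have := claim1 (k + 0) (k + 3) (by omega) (by omega) (by omega)
        ‹Bad8 (k + 0)› ‹Bad8 (k + 3)›; omega)
    | (have := claim2 (k + 0) (k + 2) (by omega) (by omega) (by omega)
        ‹Bad16 (k + 0)› ‹Bad16 (k + 2)›; omega)
    | (have := claim2 (k + 1) (k + 3) (by omega) (by omega) (by omega)
        ‹Bad16 (k + 1)› ‹Bad16 (k + 3)›; omega)
    | (have := claim2 (k + 0) (k + 3) (by omega) (by omega) (by omega)
        ‹Bad16 (k + 0)› ‹Bad16 (k + 3)›; omega)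
end

section
/- Let k ≥ 43 be an integer, A = {p^2+5p+4 : p ≥ 1}, B = {q^2+q-6 : q ≥ 1} (p, q positive integers). If 4k+10 ∈ A ∪ B, then 4k+18 ∉ A ∪ B. -/
/-- For k ≥ 43, if 4k+10 ∈ A ∪ B then 4k+18 ∉ A ∪ B, where
A = {p²+5p+4 : p ≥ 1} and B = {q²+q-6 : q ≥ 1}. -/
theorem stmt_14 (k : ℤ) (hk : 43 ≤ k)
    (h : 4 * k + 10 ∈
      ({n : ℤ | ∃ p : ℤ, 1 ≤ p ∧ n = p ^ 2 + 5 * p + 4} ∪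
        {n : ℤ | ∃ q : ℤ, 1 ≤ q ∧ n = q ^ 2 + q - 6})) :
    4 * k + 18 ∉
      ({n : ℤ | ∃ p : ℤ, 1 ≤ p ∧ n = p ^ 2 + 5 * p + 4} ∪
        {n : ℤ | ∃ q : ℤ, 1 ≤ q ∧ n = q ^ 2 + q - 6}) := by
  intro h2
  rcases h with ⟨p, hp, hpe⟩ | ⟨q, hq, hqe⟩
  · have hp12 : 12 ≤ p := by nlinarith
    rcases h2 with ⟨r, hr, hre⟩ | ⟨s, hs, hse⟩
    · -- (r-p)(r+p+5)=8, p≥12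
      rcases le_or_gt r p with hle | hlt
      · nlinarith [mul_nonneg (sub_nonneg.2 hle) (by linarith : (0:ℤ) ≤ r + p + 5)]
      · have : p + 1 ≤ r := hlt
        nlinarith [mul_nonneg (by linarith : (0:ℤ) ≤ r - p - 1) (by linarith : (0:ℤ) ≤ r + p + 5)]
    · -- s²+s = p²+5p+18, p≥12
      rcases le_or_gt s (p+2) with hle | hlt
      · nlinarith [mul_nonneg (sub_nonneg.2 hle) (by linarith : (0:ℤ) ≤ s + p + 3)]
      · nlinarith [mul_nonneg (by linarith : (0:ℤ) ≤ s - p - 3) (by linarith : (0:ℤ) ≤ s + p + 4)]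
  · have hq13 : 13 ≤ q := by nlinarith
    rcases h2 with ⟨r, hr, hre⟩ | ⟨s, hs, hse⟩
    ·
      rcases le_or_gt r (q-2) with hle | hlt
      · nlinarith [mul_nonneg (sub_nonneg.2 hle) (by linarith : (0:ℤ) ≤ r + q + 3)]
      · nlinarith [mul_nonneg (by linarith : (0:ℤ) ≤ r - q + 1) (by linarith : (0:ℤ) ≤ r + q + 4)]
    · rcases le_or_gt s q with hle | hlt
      · nlinarith [mul_nonneg (sub_nonneg.2 hle) (by linarith : (0:ℤ) ≤ s + q + 1)]
      · nlinarith [mul_nonneg (by linarith : (0:ℤ) ≤ s - q - 1) (by linarith : (0:ℤ) ≤ s + q + 1)]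
end
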